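/- There is an absolute constant C > 0 such that for every 0 < θ < 1 and every odd prime p, there exists a subset U ⊆ ℤ/pℤ with |U| ≥ (1−θ)p − 2 such that the number of 3APs (trivial and nontrivial) lying in U is at most p²·(1 − 3θ + 2.5·θ²) + C·p. -/

import Mathlib

/-- The number of three-term arithmetic progressions in `S ⊆ ℤ/pℤ`, i.e. the number of
ordered pairs `(n, m)` of residues with `n, n + m, n + 2m ∈ S` (trivial and nontrivial).
Such pairs are counted via the equivalent, bijective encoding `(n, m) ↦ (n, n + m)`,
a pair `(x, y) ∈ S × S` with `n + 2m = 2y - x ∈ S`. -/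
def threeAPCount {p : ℕ} (S : Finset (ZMod p)) : ℕ :=
  ((S ×ˢ S).filter fun q => 2 * q.2 - q.1 ∈ S).card

lemma card_filter_product {α β : Type*} (s : Finset α) (t : Finset β)
    (P : α → β → Prop) [∀ a b, Decidable (P a b)] :
    ((s ×ˢ t).filter fun q => P q.1 q.2).card
      = ∑ a ∈ s, (t.filter fun b => P a b).card := by
  rw [Finset.card_filter, Finset.sum_product]
  exact Finset.sum_congr rfl fun a _ => (Finset.card_filter _ _).symm

lemma parity_card (Lc s : ℕ) :
    ((Finset.range Lc).filter fun c => (s + c) % 2 = 0).card ≤ (Lc + 1) / 2 := by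
  calc ((Finset.range Lc).filter fun c => (s + c) % 2 = 0).card
      ≤ (Finset.range ((Lc+1)/2)).card := by
        refine Finset.card_le_card_of_injOn (fun c => c / 2) (fun c hc => ?_)
          (fun c hc d hd h => ?_)
        · simp only [Finset.mem_coe, Finset.mem_filter, Finset.mem_range] at hc ⊢; omega
        · simp only [Finset.coe_filter, Set.mem_setOf_eq, Finset.mem_range] at hc hd
          simp only at h; omega
    _ = (Lc + 1) / 2 := Finset.card_range _

lemma parity_tri_upper (Lc s N : ℕ) :
    ((Finset.range Lc).filter fun c => s + c ≤ N ∧ (s + c) % 2 = 0).card ≤ (N + 2 - s) / 2 := by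
  calc ((Finset.range Lc).filter fun c => s + c ≤ N ∧ (s + c) % 2 = 0).card
      ≤ (Finset.range ((N + 2 - s)/2)).card := by
        refine Finset.card_le_card_of_injOn (fun c => c / 2) (fun c hc => ?_)
          (fun c hc d hd h => ?_)
        · simp only [Finset.mem_coe, Finset.mem_filter, Finset.mem_range] at hc ⊢; omega
        · simp only [Finset.coe_filter, Set.mem_setOf_eq, Finset.mem_range] at hc hd
          simp only at h; omega
    _ = (N + 2 - s) / 2 := Finset.card_range _

lemma parity_tri_lower (Lc s t : ℕ) :
    ((Finset.range Lc).filter fun c => t ≤ s + c ∧ (s + c) % 2 = 0).card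
      ≤ (Lc + 1 + s - t) / 2 := by
  calc ((Finset.range Lc).filter fun c => t ≤ s + c ∧ (s + c) % 2 = 0).card
      ≤ (Finset.range ((Lc + 1 + s - t)/2)).card := by
        refine Finset.card_le_card_of_injOn (fun c => (s + c - t) / 2) (fun c hc => ?_)
          (fun c hc d hd h => ?_)
        · simp only [Finset.mem_coe, Finset.mem_filter, Finset.mem_range] at hc ⊢; omega
        · simp only [Finset.coe_filter, Set.mem_setOf_eq, Finset.mem_range] at hc hd
          simp only at h; omega
    _ = (Lc + 1 + s - t) / 2 := Finset.card_range _

lemma sum_tri (e d : ℕ) : ∀ n : ℕ,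
    4 * ∑ a ∈ Finset.range n, (a + e - d) / 2 ≤ (n + e - d + 1) ^ 2 := by
  intro n
  induction n with
  | zero => rw [Finset.range_zero, Finset.sum_empty]; exact Nat.zero_le _
  | succ n ih =>
    rw [Finset.sum_range_succ]
    rcases le_or_gt d (n + e) with h | h
    · set m := n + e - d with hm
      have h1 : n + 1 + e - d = m + 1 := by omega
      have h2 : 4 * ((n + e - d) / 2) ≤ 2 * m := by omega
      rw [h1]
      have : (m + 1 + 1)^2 = (m+1)^2 + 2*m + 3 := by ring
      rw [this]
      omega
    · have h1 : (n + e - d)/2 = 0 := by omega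
      rw [h1]
      have hb : (n + e - d + 1)^2 = 1 := by rw [show n + e - d = 0 by omega]; norm_num
      have hc : 1 ≤ (n + 1 + e - d + 1)^2 := Nat.one_le_pow _ _ (by omega)
      omega

lemma key_count (p L : ℕ) [NeZero p] (hpodd : p % 2 = 1) (hLp : L ≤ p) :
    4 * ((Finset.range L ×ˢ Finset.range L).filter
        fun q => (2 * (q.2 : ZMod p) - (q.1 : ZMod p)).val < L).card
      ≤ 2*L^2 + 2*(2*L - p)^2 + 12*(2*L - p) + 2*L + 20 := by
  classical
  set R := Finset.range L ×ˢ Finset.range L with hR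
  set F1 := R.filter (fun q => q.1 ≤ 2*q.2 ∧ 2*q.2 < q.1 + L) with hF1
  set F2 := R.filter (fun q => q.1 + p ≤ 2*q.2 ∧ 2*q.2 < q.1 + p + L) with hF2
  set F3 := R.filter (fun q => 2*q.2 + p < q.1 + L) with hF3
  have hsub : R.filter (fun q => (2 * (q.2 : ZMod p) - (q.1 : ZMod p)).val < L)
      ⊆ (F1 ∪ F2) ∪ F3 := by
    intro q hq
    simp only [hR, Finset.mem_filter, Finset.mem_product, Finset.mem_range] at hq
    obtain ⟨⟨ha, hb⟩, hval⟩ := hq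
    have hcast : (((2*(q.2:ℤ) - (q.1:ℤ)) : ℤ) : ZMod p) = 2*(q.2:ZMod p) - (q.1:ZMod p) := by
      push_cast; ring
    have hv : (((2 * (q.2 : ZMod p) - (q.1 : ZMod p)).val : ℕ) : ℤ)
        = (2*(q.2:ℤ) - (q.1:ℤ)) % p := by
      rw [← hcast]; exact ZMod.val_intCast _
    have hp1 : 0 < p := Nat.pos_of_ne_zero (NeZero.ne p)
    set t := 2*(q.2:ℤ) - (q.1:ℤ) with ht
    have htlb : -(L:ℤ) < t := by simp only [ht]; push_cast; omega
    have htub : t < 2*L := by simp only [ht]; push_cast; omega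
    simp only [Finset.mem_union, hF1, hF2, hF3, Finset.mem_filter, hR,
      Finset.mem_product, Finset.mem_range]
    rcases lt_or_ge t 0 with hneg | hpos
    · -- t + p case
      have hm : t % p = t + p := by
        have h1 : (t + p) % p = t % p := by simp [Int.add_emod]
        rw [← h1, Int.emod_eq_of_lt (by push_cast; omega) (by push_cast; omega)]
      rw [hm] at hv
      right
      refine ⟨⟨ha, hb⟩, ?_⟩
      have := hval
      omega
    · rcases lt_or_ge t (p:ℤ) with hlt | hge
      · have hm : t % p = t := Int.emod_eq_of_lt hpos hlt
        rw [hm] at hv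
        left; left
        refine ⟨⟨ha, hb⟩, ?_⟩
        omega
      · have hm : t % p = t - p := by
          have h1 : (t - p) % p = t % p := by simp [Int.sub_emod]
          rw [← h1, Int.emod_eq_of_lt (by omega) (by push_cast; omega)]
        rw [hm] at hv
        left; right
        refine ⟨⟨ha, hb⟩, ?_⟩
        omega
  have hcards : (R.filter (fun q => (2 * (q.2 : ZMod p) - (q.1 : ZMod p)).val < L)).card
      ≤ F1.card + F2.card + F3.card := by
    calc _ ≤ ((F1 ∪ F2) ∪ F3).card := Finset.card_le_card hsub
      _ ≤ (F1 ∪ F2).card + F3.card := Finset.card_union_le _ _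
      _ ≤ F1.card + F2.card + F3.card := by
          have := Finset.card_union_le F1 F2; omega
  -- injections into parity sets
  set S1 := R.filter (fun q => (q.1 + q.2) % 2 = 0) with hS1
  set S2 := R.filter (fun q => (q.1 + p) + q.2 ≤ 2*L ∧ ((q.1 + p) + q.2) % 2 = 0) with hS2
  set S3 := R.filter (fun q => 2*p ≤ (q.1 + p) + q.2 ∧ ((q.1 + p) + q.2) % 2 = 0) with hS3
  have hc1 : F1.card ≤ S1.card := by
    refine Finset.card_le_card_of_injOn (fun q => (q.1, 2*q.2 - q.1)) (fun q hq => ?_)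
      (fun q hq r hr h => ?_)
    · simp only [Finset.mem_coe, hF1, hS1, hR, Finset.mem_filter, Finset.mem_product, Finset.mem_range] at hq ⊢
      omega
    · simp only [hF1, hR, Finset.coe_filter, Set.mem_setOf_eq, Finset.mem_product,
        Finset.mem_range] at hq hr
      have h1 := congrArg Prod.fst h
      have h2 := congrArg Prod.snd h
      simp only at h1 h2
      exact Prod.ext h1 (by omega)
  have hc2 : F2.card ≤ S2.card := by
    refine Finset.card_le_card_of_injOn (fun q => (q.1, 2*q.2 - q.1 - p)) (fun q hq => ?_)
      (fun q hq r hr h => ?_)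
    · simp only [Finset.mem_coe, hF2, hS2, hR, Finset.mem_filter, Finset.mem_product, Finset.mem_range] at hq ⊢
      omega
    · simp only [hF2, hR, Finset.coe_filter, Set.mem_setOf_eq, Finset.mem_product,
        Finset.mem_range] at hq hr
      have h1 := congrArg Prod.fst h
      have h2 := congrArg Prod.snd h
      simp only at h1 h2
      exact Prod.ext h1 (by omega)
  have hc3 : F3.card ≤ S3.card := by
    refine Finset.card_le_card_of_injOn (fun q => (q.1, 2*q.2 + p - q.1)) (fun q hq => ?_)
      (fun q hq r hr h => ?_)
    · simp only [Finset.mem_coe, hF3, hS3, hR, Finset.mem_filter, Finset.mem_product, Finset.mem_range] at hq ⊢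
      omega
    · simp only [hF3, hR, Finset.coe_filter, Set.mem_setOf_eq, Finset.mem_product,
        Finset.mem_range] at hq hr
      have h1 := congrArg Prod.fst h
      have h2 := congrArg Prod.snd h
      simp only at h1 h2
      exact Prod.ext h1 (by omega)
  -- bounds on S-cards
  have hb1 : 4 * S1.card ≤ 2*L^2 + 2*L := by
    have := card_filter_product (Finset.range L) (Finset.range L)
      (fun a b => (a + b) % 2 = 0)
    rw [hS1, hR, this]
    have hsum : ∑ a ∈ Finset.range L, ((Finset.range L).filter fun b => (a + b) % 2 = 0).card
        ≤ ∑ _a ∈ Finset.range L, (L+1)/2 :=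
      Finset.sum_le_sum fun a _ => parity_card L a
    rw [Finset.sum_const, Finset.card_range, smul_eq_mul] at hsum
    have : 4 * (L * ((L+1)/2)) = L * (4 * ((L+1)/2)) := by ring
    have h4 : 4 * ((L+1)/2) ≤ 2*(L+1) := by omega
    calc 4 * _ ≤ 4 * (L * ((L+1)/2)) := by omega
      _ = L * (4 * ((L+1)/2)) := by ring
      _ ≤ L * (2*(L+1)) := Nat.mul_le_mul_left _ h4
      _ = 2*L^2 + 2*L := by ring
  have hb2 : 4 * S2.card ≤ (2*L - p + 4)^2 := by
    have hcp := card_filter_product (Finset.range L) (Finset.range L)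
      (fun a b => (a + p) + b ≤ 2*L ∧ ((a + p) + b) % 2 = 0)
    have hsum : ∑ a ∈ Finset.range L,
        ((Finset.range L).filter fun b => (a + p) + b ≤ 2*L ∧ ((a + p) + b) % 2 = 0).card
        ≤ ∑ a ∈ Finset.range L, (2*L + 2 - (a + p))/2 :=
      Finset.sum_le_sum fun a _ => parity_tri_upper L (a+p) (2*L)
    have hrefl : ∑ a ∈ Finset.range L, (2*L + 2 - (a + p))/2
        = ∑ a ∈ Finset.range L, (a + (L+3) - p)/2 := by
      rw [← Finset.sum_range_reflect (fun a => (a + (L+3) - p)/2) L]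
      refine Finset.sum_congr rfl fun a ha => ?_
      rw [Finset.mem_range] at ha
      congr 1
      omega
    calc 4 * S2.card
        = 4 * ∑ a ∈ Finset.range L,
            ((Finset.range L).filter fun b => (a + p) + b ≤ 2*L ∧ ((a + p) + b) % 2 = 0).card := by
          rw [hS2, hR, hcp]
      _ ≤ 4 * ∑ a ∈ Finset.range L, (2*L + 2 - (a + p))/2 := by omega
      _ = 4 * ∑ a ∈ Finset.range L, (a + (L+3) - p)/2 := by rw [hrefl]
      _ ≤ (L + (L+3) - p + 1)^2 := sum_tri (L+3) p L
      _ ≤ (2*L - p + 4)^2 := Nat.pow_le_pow_left (by omega) 2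
  have hb3 : 4 * S3.card ≤ (2*L - p + 2)^2 := by
    have hcp := card_filter_product (Finset.range L) (Finset.range L)
      (fun a b => 2*p ≤ (a + p) + b ∧ ((a + p) + b) % 2 = 0)
    have hsum : ∑ a ∈ Finset.range L,
        ((Finset.range L).filter fun b => 2*p ≤ (a + p) + b ∧ ((a + p) + b) % 2 = 0).card
        ≤ ∑ a ∈ Finset.range L, (L + 1 + (a + p) - 2*p)/2 :=
      Finset.sum_le_sum fun a _ => parity_tri_lower L (a+p) (2*p)
    have heq : ∑ a ∈ Finset.range L, (L + 1 + (a + p) - 2*p)/2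
        = ∑ a ∈ Finset.range L, (a + (L+1) - p)/2 := by
      refine Finset.sum_congr rfl fun a ha => ?_
      congr 1
      omega
    calc 4 * S3.card
        = 4 * ∑ a ∈ Finset.range L,
            ((Finset.range L).filter fun b => 2*p ≤ (a + p) + b ∧ ((a + p) + b) % 2 = 0).card := by
          rw [hS3, hR, hcp]
      _ ≤ 4 * ∑ a ∈ Finset.range L, (L + 1 + (a + p) - 2*p)/2 := by omega
      _ = 4 * ∑ a ∈ Finset.range L, (a + (L+1) - p)/2 := by rw [heq]
      _ ≤ (L + (L+1) - p + 1)^2 := sum_tri (L+1) p L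
      _ ≤ (2*L - p + 2)^2 := Nat.pow_le_pow_left (by omega) 2
  -- assemble
  set K := 2*L - p with hK
  have e2 : (2*L - p + 4)^2 ≤ (K+4)^2 := Nat.pow_le_pow_left (by omega) 2
  have e3 : (2*L - p + 2)^2 ≤ (K+2)^2 := Nat.pow_le_pow_left (by omega) 2
  have expand : (K+4)^2 + (K+2)^2 = 2*K^2 + 12*K + 20 := by ring
  omega

/-- There is an absolute constant `C > 0` such that for every `0 < θ < 1` and every odd
prime `p` there is `U ⊆ ℤ/pℤ` with `|U| ≥ (1 - θ)p - 2` whose number of 3APs (trivial and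
nontrivial) is at most `p²(1 - 3θ + 2.5θ²) + Cp`. -/
theorem exists_set_with_few_aps :
    ∃ C : ℝ, 0 < C ∧ ∀ θ : ℝ, 0 < θ → θ < 1 → ∀ p : ℕ, p.Prime → Odd p →
      ∃ U : Finset (ZMod p),
        (1 - θ) * p - 2 ≤ (U.card : ℝ) ∧
        (threeAPCount U : ℝ) ≤ (p : ℝ) ^ 2 * (1 - 3 * θ + 2.5 * θ ^ 2) + C * p := by
  refine ⟨21, by norm_num, fun θ hθ0 hθ1 p hp hodd => ?_⟩
  haveI : NeZero p := ⟨hp.pos.ne'⟩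
  have hpodd : p % 2 = 1 := Nat.odd_iff.mp hodd
  have hp3 : 3 ≤ p := by
    have := hp.two_le
    omega
  set L : ℕ := ⌊(1 - θ) * p⌋₊ with hLdef
  have h0 : (0:ℝ) ≤ (1 - θ) * p := mul_nonneg (by linarith) (Nat.cast_nonneg p)
  have hLle : (L:ℝ) ≤ (1 - θ) * p := Nat.floor_le h0
  have hLlt : (1 - θ) * p < (L:ℝ) + 1 := Nat.lt_floor_add_one _
  have hLp : L ≤ p := by
    have h1 : (L:ℝ) ≤ (p:ℝ) := by nlinarith [Nat.cast_nonneg (α := ℝ) p]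
    exact_mod_cast h1
  -- the interval U
  set U : Finset (ZMod p) := (Finset.range L).image (Nat.cast) with hU
  have hmem : ∀ z : ZMod p, z ∈ U ↔ z.val < L := by
    intro z
    constructor
    · rintro hz
      rw [hU, Finset.mem_image] at hz
      obtain ⟨n, hn, rfl⟩ := hz
      rw [Finset.mem_range] at hn
      rwa [ZMod.val_cast_of_lt (lt_of_lt_of_le hn hLp)]
    · intro hz
      rw [hU, Finset.mem_image]
      exact ⟨z.val, Finset.mem_range.mpr hz, ZMod.natCast_rightInverse z⟩
  have hcard : U.card = L := by
    rw [hU, Finset.card_image_of_injOn, Finset.card_range]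
    intro n hn m hm h
    simp only [Finset.coe_range, Set.mem_Iio] at hn hm
    have := congrArg ZMod.val h
    rwa [ZMod.val_cast_of_lt (lt_of_lt_of_le hn hLp),
      ZMod.val_cast_of_lt (lt_of_lt_of_le hm hLp)] at this
  have hcount : threeAPCount U
      = ((Finset.range L ×ˢ Finset.range L).filter
          fun q => (2 * (q.2 : ZMod p) - (q.1 : ZMod p)).val < L).card := by
    rw [threeAPCount]
    refine Finset.card_bij' (fun r _ => (r.1.val, r.2.val))
      (fun q _ => ((q.1 : ZMod p), (q.2 : ZMod p))) ?_ ?_ ?_ ?_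
    · intro r hr
      simp only [Finset.mem_filter, Finset.mem_product, Finset.mem_range] at hr ⊢
      have h1 : ((r.1.val : ℕ) : ZMod p) = r.1 := ZMod.natCast_rightInverse r.1
      have h2 : ((r.2.val : ℕ) : ZMod p) = r.2 := ZMod.natCast_rightInverse r.2
      refine ⟨⟨(hmem _).mp hr.1.1, (hmem _).mp hr.1.2⟩, ?_⟩
      rw [h1, h2]
      exact (hmem _).mp hr.2
    · intro q hq
      simp only [Finset.mem_filter, Finset.mem_product, Finset.mem_range] at hq ⊢
      exact ⟨⟨(hmem _).mpr (by rw [ZMod.val_cast_of_lt (lt_of_lt_of_le hq.1.1 hLp)]; exact hq.1.1),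
        (hmem _).mpr (by rw [ZMod.val_cast_of_lt (lt_of_lt_of_le hq.1.2 hLp)]; exact hq.1.2)⟩,
        (hmem _).mpr hq.2⟩
    · intro r hr
      exact Prod.ext (ZMod.natCast_rightInverse r.1) (ZMod.natCast_rightInverse r.2)
    · intro q hq
      simp only [Finset.mem_filter, Finset.mem_product, Finset.mem_range] at hq
      exact Prod.ext (ZMod.val_cast_of_lt (lt_of_lt_of_le hq.1.1 hLp))
        (ZMod.val_cast_of_lt (lt_of_lt_of_le hq.1.2 hLp))
  have key := key_count p L hpodd hLp
  rw [← hcount] at key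
  -- real-number bounds
  set K : ℕ := 2 * L - p with hK
  have hKcast : (K:ℝ)^2 ≤ ((1 - 2*θ) * p)^2 := by
    rcases le_or_gt (2*L) p with h | h
    · have : K = 0 := by omega
      rw [this]
      simpa using sq_nonneg ((1 - 2*θ) * p)
    · have hKeq : (K:ℝ) = 2*(L:ℝ) - p := by
        rw [hK]
        push_cast [Nat.cast_sub (le_of_lt h)]
        ring
      have h1 : (K:ℝ) ≤ (1 - 2*θ) * p := by rw [hKeq]; nlinarith
      exact pow_le_pow_left₀ (Nat.cast_nonneg K) h1 2
  have hKle : (K:ℝ) ≤ (p:ℝ) := by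
    have : K ≤ p := by omega
    exact_mod_cast this
  have hLcast : (L:ℝ)^2 ≤ ((1 - θ) * p)^2 := pow_le_pow_left₀ (Nat.cast_nonneg L) hLle 2
  have hLpR : (L:ℝ) ≤ (p:ℝ) := by exact_mod_cast hLp
  have hpR : (3:ℝ) ≤ (p:ℝ) := by exact_mod_cast hp3
  have key' : 4 * ((threeAPCount U : ℝ))
      ≤ 2*(L:ℝ)^2 + 2*(K:ℝ)^2 + 12*(K:ℝ) + 2*(L:ℝ) + 20 := by
    have := Nat.cast_le (α := ℝ) |>.mpr key
    push_cast at this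
    linarith
  refine ⟨U, ?_, ?_⟩
  · rw [hcard]
    linarith
  · nlinarith [hKcast, hLcast, hKle, hLpR, hpR, key']
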